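/- Model soundness via interpretation: let h be a function from terms of the unsorted Toyama signature restricted to well-sorted terms into ℕ defined by h(0)=0, h(1)=1, h(f(t₁,t₂,t₃)) = h(t₁)+h(t₂)+h(t₃), h(g(t₁,t₂)) = h(t₁)+h(t₂)+1. Then for every one-step order-sorted rewrite t → t' (with variable x in the first rule restricted to terms of sort S2, all of which satisfy h = 0), we have h(t) > h(t'). -/
import Mathlib


/-- Terms over the Toyama signature. -/
inductive Tm : Type
  | zero : Tm
  | one : Tm
  | f : Tm → Tm → Tm → Tm
  | g : Tm → Tm → Tm

/-- Terms of sort S2 (only the constant 0). -/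
inductive IsS2 : Tm → Prop
  | zero : IsS2 Tm.zero

/-- Terms of sort S1. -/
inductive IsS1 : Tm → Prop
  | zero : IsS1 Tm.zero
  | one : IsS1 Tm.one
  | g {a b : Tm} : IsS1 a → IsS1 b → IsS1 (Tm.g a b)

/-- One-step order-sorted rewriting, closed under congruence rules. -/
inductive Step : Tm → Tm → Prop
  | rule1 {x : Tm} : IsS2 x → Step (Tm.f Tm.zero Tm.one x) (Tm.f x x x)
  | rule2 {y z : Tm} : IsS1 y → IsS1 z → Step (Tm.g y z) y
  | rule3 {y z : Tm} : IsS1 y → IsS1 z → Step (Tm.g y z) z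
  | f₁ {a a' b c : Tm} : Step a a' → Step (Tm.f a b c) (Tm.f a' b c)
  | f₂ {a b b' c : Tm} : Step b b' → Step (Tm.f a b c) (Tm.f a b' c)
  | f₃ {a b c c' : Tm} : Step c c' → Step (Tm.f a b c) (Tm.f a b c')
  | g₁ {a a' b : Tm} : Step a a' → Step (Tm.g a b) (Tm.g a' b)
  | g₂ {a b b' : Tm} : Step b b' → Step (Tm.g a b) (Tm.g a b')

/-- Interpretation of terms in ℕ: h(0)=0, h(1)=1, h(f(a,b,c))=h(a)+h(b)+h(c),
h(g(a,b))=h(a)+h(b)+1. -/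
def h : Tm → ℕ
  | Tm.zero => 0
  | Tm.one => 1
  | Tm.f a b c => h a + h b + h c
  | Tm.g a b => h a + h b + 1

theorem toyama_model_soundness : ∀ t t' : Tm, Step t t' → h t > h t' := by
  intro t t' st
  induction st with
  | rule1 hx => cases hx; simp [h]
  | rule2 hy hz => simp [h]
  | rule3 hy hz => simp [h]
  | f₁ _ ih => simp [h]; omega
  | f₂ _ ih => simp [h]; omega
  | f₃ _ ih => simp [h]; omega
  | g₁ _ ih => simp [h]; omega
  | g₂ _ ih => simp [h]; omega
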